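/- Let G ≤ Aut(T_d) be a persistent, finite-state, self-similar subgroup. If the Röver–Nekrashevych group V_d(G) is finitely generated, then G is finitely generated. -/
import Mathlib


namespace RoverNekrashevych

variable {X : Type*}

/-- The state (section) of `f` at the word `u`. -/
def state (f : List X → List X) (u : List X) : List X → List X :=
  fun w => (f (u ++ w)).drop u.length

/-- `f` is an automorphism of the infinite rooted tree with vertex set `List X`. -/
def IsTreeAut (f : Equiv.Perm (List X)) : Prop :=
  f [] = [] ∧ ∀ (u : List X) (x : X), ∃ y : X, f (u ++ [x]) = f u ++ [y]

/-- `G` consists of tree automorphisms. -/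
def IsTreeAutGroup (G : Subgroup (Equiv.Perm (List X))) : Prop :=
  ∀ f ∈ G, IsTreeAut f

/-- `G` is self-similar: all states of elements of `G` are realized by elements of `G`. -/
def SelfSimilar (G : Subgroup (Equiv.Perm (List X))) : Prop :=
  ∀ f ∈ G, ∀ u : List X, ∃ g ∈ G, ⇑g = state (⇑f) u

/-- A function is finite-state if it has only finitely many states. -/
def FiniteStateFun (f : List X → List X) : Prop :=
  Set.Finite {g : List X → List X | ∃ u : List X, g = state f u}

/-- `G` is finite-state if all its elements are. -/
def FiniteStateGroup (G : Subgroup (Equiv.Perm (List X))) : Prop :=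
  ∀ f ∈ G, FiniteStateFun ⇑f

/-- `G` is `i`-persistent: the state of every element at `[i]` is the element itself. -/
def Persistent (G : Subgroup (Equiv.Perm (List X))) (i : X) : Prop :=
  ∀ f ∈ G, state (⇑f) [i] = ⇑f

/-- `G` is coarsely diagonal: for `f ∈ G`, each state `f_u` is realized by some `g ∈ G`,
and `g⁻¹ * f` has finite order. -/
def CoarselyDiagonal (G : Subgroup (Equiv.Perm (List X))) : Prop :=
  ∀ f ∈ G, ∀ u : List X, ∃ g ∈ G, ⇑g = state (⇑f) u ∧ IsOfFinOrder (g⁻¹ * f)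

/-- The length-`n` prefix of a boundary point `p : ℕ → X`. -/
def prefixFn (p : ℕ → X) (n : ℕ) : List X :=
  List.ofFn fun i : Fin n => p i

/-- The homeomorphism of the boundary `ℕ → X` induced by a tree automorphism:
for every `n`, the length-`n` prefix of `boundary f p` is the `f`-image of the
length-`n` prefix of `p`. -/
def boundary (f : List X → List X) (p : ℕ → X) : ℕ → X :=
  fun n => (f (prefixFn p (n + 1))).getD n (p n)

/-- Concatenation `u·p` of a finite word and a boundary point. -/
def catWord (u : List X) (p : ℕ → X) : ℕ → X :=
  fun n => if h : n < u.length then u.get ⟨n, h⟩ else p (n - u.length)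

/-- A leaf set: a finite set of words such that every boundary point has exactly one
prefix in the set. -/
def IsLeafSet (L : Set (List X)) : Prop :=
  L.Finite ∧ ∀ p : ℕ → X, ∃! u : List X, u ∈ L ∧ prefixFn p u.length = u

variable [LinearOrder X]

/-- The triple `(L₋, σ, (g_1,…,g_n), L₊)`, with the leaves of `L₋` and `L₊` listed by the
strictly increasing (in the lexicographic order) enumerations `u` and `v`, represents the
homeomorphism `h` of the boundary: `h (vᵢ·p) = u_{σ i}·(ĝᵢ p)` for all `i` and `p`. -/
def Represents (G : Subgroup (Equiv.Perm (List X))) (h : (ℕ → X) → ℕ → X)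
    (n : ℕ) (u v : Fin n → List X) (σ : Equiv.Perm (Fin n))
    (g : Fin n → Equiv.Perm (List X)) : Prop :=
  StrictMono u ∧ StrictMono v ∧ IsLeafSet (Set.range u) ∧ IsLeafSet (Set.range v) ∧
  (∀ i, g i ∈ G) ∧
  ∀ (i : Fin n) (p : ℕ → X), h (catWord (v i) p) = catWord (u (σ i)) (boundary (⇑(g i)) p)

/-- The underlying set of the Röver–Nekrashevych group `V_d(G)`: all self-bijections of the
boundary represented by some triple. -/
def RNSet (G : Subgroup (Equiv.Perm (List X))) : Set (Equiv.Perm (ℕ → X)) :=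
  {h | ∃ (n : ℕ) (u v : Fin n → List X) (σ : Equiv.Perm (Fin n))
      (g : Fin n → Equiv.Perm (List X)), Represents G (⇑h) n u v σ g}


section Aux

variable {X : Type*}

lemma IsTreeAut.length_eq {f : Equiv.Perm (List X)} (hf : IsTreeAut f) :
    ∀ w : List X, (f w).length = w.length := by
  intro w
  induction w using List.reverseRecOn with
  | nil => simp [hf.1]
  | append_singleton u x ih =>
      obtain ⟨y, hy⟩ := hf.2 u x
      simp [hy, ih]

lemma IsTreeAut.take_eq {f : Equiv.Perm (List X)} (hf : IsTreeAut f) (u : List X) :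
    ∀ w : List X, (f (u ++ w)).take u.length = f u := by
  intro w
  induction w using List.reverseRecOn with
  | nil => simp [List.take_of_length_le (le_of_eq (hf.length_eq u))]
  | append_singleton w x ih =>
      obtain ⟨y, hy⟩ := hf.2 (u ++ w) x
      rw [← List.append_assoc, hy, List.take_append_of_le_length, ih]
      rw [hf.length_eq]; simp

lemma IsTreeAut.append_state {f : Equiv.Perm (List X)} (hf : IsTreeAut f) (u w : List X) :
    f (u ++ w) = f u ++ state (⇑f) u w := by
  conv_lhs => rw [← List.take_append_drop u.length (f (u ++ w))]
  rw [hf.take_eq u w]; rfl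

lemma state_length {f : Equiv.Perm (List X)} (hf : IsTreeAut f) (u w : List X) :
    (state (⇑f) u w).length = w.length := by
  simp [state, hf.length_eq]

lemma state_state (f : List X → List X) (u u' : List X) :
    state (state f u) u' = state f (u ++ u') := by
  funext w
  simp [state, List.drop_drop, List.append_assoc, Nat.add_comm]

end Aux
section Aux2

variable {X : Type*}

lemma state_comp {f : List X → List X} {g : Equiv.Perm (List X)} (hg : IsTreeAut g)
    (u : List X) : state (f ∘ ⇑g) u = state f (g u) ∘ state (⇑g) u := by
  funext w
  show List.drop u.length (f (g (u ++ w))) = state f (g u) (state (⇑g) u w)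
  rw [hg.append_state u w, show u.length = (g u).length from (hg.length_eq u).symm]
  rfl

lemma state_one (u : List X) : state (⇑(1 : Equiv.Perm (List X))) u = id := by
  funext w; simp [state]

lemma state_mul {f g : Equiv.Perm (List X)} (hg : IsTreeAut g) (u : List X) :
    state (⇑(f * g)) u = state (⇑f) (g u) ∘ state (⇑g) u := by
  have h : ⇑(f * g) = ⇑f ∘ ⇑g := rfl
  rw [h, state_comp hg]

lemma prefixFn_length (p : ℕ → X) (n : ℕ) : (prefixFn p n).length = n := by
  simp [prefixFn]

lemma prefixFn_succ (p : ℕ → X) (n : ℕ) :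
    prefixFn p (n + 1) = prefixFn p n ++ [p n] := by
  apply List.ext_getElem
  · simp [prefixFn]
  · intro k h1 h2
    simp only [prefixFn, List.getElem_ofFn]
    rcases Nat.lt_or_ge k n with h | h
    · rw [List.getElem_append_left (by simpa [prefixFn] using h)]
      simp [prefixFn]
    · have h1' : k < n + 1 := by simpa [prefixFn_length] using h1
      have hk : k = n := by omega
      subst hk
      rw [List.getElem_append_right (by simp [prefixFn])]
      simp [prefixFn]

lemma catWord_apply_lt (u : List X) (p : ℕ → X) {n : ℕ} (h : n < u.length) :
    catWord u p n = u[n] := by simp [catWord, h]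

lemma catWord_apply_ge (u : List X) (p : ℕ → X) {n : ℕ} (h : u.length ≤ n) :
    catWord u p n = p (n - u.length) := by
  simp [catWord, Nat.not_lt.mpr h]

lemma catWord_apply_add (u : List X) (p : ℕ → X) (n : ℕ) :
    catWord u p (n + u.length) = p n := by
  rw [catWord_apply_ge u p (Nat.le_add_left _ _)]
  simp

lemma prefixFn_catWord_le (u : List X) (p : ℕ → X) {k : ℕ} (h : k ≤ u.length) :
    prefixFn (catWord u p) k = u.take k := by
  apply List.ext_getElem
  · simp [prefixFn_length, h]
  · intro n h1 h2
    rw [prefixFn_length] at h1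
    have hn : n < u.length := lt_of_lt_of_le h1 h
    simp only [prefixFn, List.getElem_ofFn, List.getElem_take]
    exact catWord_apply_lt u p hn

lemma prefixFn_catWord (u : List X) (p : ℕ → X) :
    prefixFn (catWord u p) u.length = u := by
  rw [prefixFn_catWord_le u p le_rfl, List.take_length]

lemma prefixFn_catWord_add (u : List X) (p : ℕ → X) (l : ℕ) :
    prefixFn (catWord u p) (u.length + l) = u ++ prefixFn p l := by
  induction l with
  | zero => simpa [prefixFn] using prefixFn_catWord u p
  | succ l ih =>
      rw [← Nat.add_assoc, prefixFn_succ, ih, prefixFn_succ, List.append_assoc]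
      congr 2
      rw [Nat.add_comm u.length l, catWord_apply_add]

lemma catWord_append (u v : List X) (p : ℕ → X) :
    catWord (u ++ v) p = catWord u (catWord v p) := by
  funext n
  rcases lt_or_ge n u.length with h | h
  · rw [catWord_apply_lt _ _ (by simp; omega), catWord_apply_lt _ _ h]
    exact List.getElem_append_left h
  · rw [catWord_apply_ge _ _ h]
    rcases lt_or_ge n (u.length + v.length) with h2 | h2
    · rw [catWord_apply_lt _ _ (by simp; omega), catWord_apply_lt _ _ (by omega)]
      exact List.getElem_append_right h
    · rw [catWord_apply_ge _ _ (by simp; omega), catWord_apply_ge _ _ (by omega)]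
      congr 1
      simp
      omega

end Aux2
section Aux3

variable {X : Type*}

lemma prefixFn_boundary {f : Equiv.Perm (List X)} (hf : IsTreeAut f) (p : ℕ → X) :
    ∀ n : ℕ, prefixFn (boundary (⇑f) p) n = f (prefixFn p n) := by
  intro n
  induction n with
  | zero =>
      have : prefixFn p 0 = ([] : List X) := by simp [prefixFn]
      simp [prefixFn, this, hf.1]
  | succ n ih =>
      rw [prefixFn_succ, ih, prefixFn_succ p n]
      obtain ⟨y, hy⟩ := hf.2 (prefixFn p n) (p n)
      rw [hy]
      congr 1
      show [boundary (⇑f) p n] = [y]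
      congr 1
      show (f (prefixFn p (n + 1))).getD n (p n) = y
      rw [prefixFn_succ p n, hy]
      have hlen : (f (prefixFn p n)).length = n := by rw [hf.length_eq, prefixFn_length]
      rw [List.getD_eq_getElem _ _ (by simp [hlen])]
      rw [List.getElem_append_right (by omega)]
      simp [hlen]

lemma boundary_comp {f g : Equiv.Perm (List X)} (hf : IsTreeAut f) (hg : IsTreeAut g)
    (p : ℕ → X) : boundary (⇑f ∘ ⇑g) p = boundary (⇑f) (boundary (⇑g) p) := by
  funext n
  show ((⇑f ∘ ⇑g) (prefixFn p (n + 1))).getD n (p n)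
      = (f (prefixFn (boundary (⇑g) p) (n + 1))).getD n (boundary (⇑g) p n)
  rw [prefixFn_boundary hg]
  have hlen : (f (g (prefixFn p (n + 1)))).length = n + 1 := by
    rw [hf.length_eq, hg.length_eq, prefixFn_length]
  rw [List.getD_eq_getElem _ _ (by simp [hlen]), List.getD_eq_getElem _ _ (by simp [hlen])]
  rfl

lemma boundary_mul {f g : Equiv.Perm (List X)} (hf : IsTreeAut f) (hg : IsTreeAut g)
    (p : ℕ → X) : boundary (⇑(f * g)) p = boundary (⇑f) (boundary (⇑g) p) := by
  have h : ⇑(f * g) = ⇑f ∘ ⇑g := rfl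
  rw [h, boundary_comp hf hg]

lemma boundary_one (p : ℕ → X) : boundary (⇑(1 : Equiv.Perm (List X))) p = p := by
  funext n
  show (prefixFn p (n + 1)).getD n (p n) = p n
  rw [List.getD_eq_getElem _ _ (by simp [prefixFn_length])]
  simp only [prefixFn, List.getElem_ofFn]

lemma boundary_inv_right {f : Equiv.Perm (List X)} (hf : IsTreeAut f) (hf' : IsTreeAut f⁻¹)
    (p : ℕ → X) : boundary (⇑f) (boundary (⇑f⁻¹) p) = p := by
  rw [← boundary_mul hf hf', mul_inv_cancel, boundary_one]

lemma boundary_inv_left {f : Equiv.Perm (List X)} (hf : IsTreeAut f) (hf' : IsTreeAut f⁻¹)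
    (p : ℕ → X) : boundary (⇑f⁻¹) (boundary (⇑f) p) = p := by
  rw [← boundary_mul hf' hf, inv_mul_cancel, boundary_one]

lemma boundary_injective [Nonempty X] {f g : Equiv.Perm (List X)} (hf : IsTreeAut f)
    (hg : IsTreeAut g) (h : boundary (⇑f) = boundary (⇑g)) : f = g := by
  obtain ⟨x⟩ := ‹Nonempty X›
  apply Equiv.coe_fn_injective
  funext u
  show f u = g u
  have key : ∀ (k : Equiv.Perm (List X)), IsTreeAut k →
      k u = prefixFn (boundary (⇑k) (catWord u (fun _ => x))) u.length := by
    intro k hk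
    rw [prefixFn_boundary hk, prefixFn_catWord]
  rw [key f hf, key g hg, h]

lemma boundary_catWord {f : Equiv.Perm (List X)} (hf : IsTreeAut f) (c : List X) (q : ℕ → X) :
    boundary (⇑f) (catWord c q) = catWord (f c) (boundary (state (⇑f) c) q) := by
  funext n
  rcases lt_or_ge n c.length with h | h
  · rw [catWord_apply_lt _ _ (by rw [hf.length_eq]; exact h)]
    show (f (prefixFn (catWord c q) (n + 1))).getD n (catWord c q n) = _
    rw [prefixFn_catWord_le c q (by omega)]
    have htake : f (c.take (n + 1)) = (f c).take (n + 1) := by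
      have hsplit : f c = f (c.take (n + 1)) ++ state (⇑f) (c.take (n + 1)) (c.drop (n + 1)) := by
        conv_lhs => rw [← List.take_append_drop (n + 1) c]
        exact hf.append_state _ _
      rw [hsplit, List.take_left' (by rw [hf.length_eq, List.length_take]; omega)]
    rw [htake]
    rw [List.getD_eq_getElem _ _ (by rw [List.length_take, hf.length_eq]; omega)]
    simp [List.getElem_take]
  · set m := n - c.length with hm
    have hlenfc : (f c).length = c.length := hf.length_eq c
    have hR : catWord (f c) (boundary (state (⇑f) c) q) n
        = (state (⇑f) c (prefixFn q (m + 1))).getD m (q m) := by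
      rw [catWord_apply_ge _ _ (by omega), hlenfc, ← hm]
      rfl
    rw [hR]
    show (f (prefixFn (catWord c q) (n + 1))).getD n (catWord c q n) = _
    rw [show n + 1 = c.length + (m + 1) by omega, prefixFn_catWord_add, hf.append_state]
    rw [List.getD_append_right _ _ _ _ (by omega), hlenfc, ← hm]
    have hlens : (state (⇑f) c (prefixFn q (m + 1))).length = m + 1 := by
      rw [state_length hf, prefixFn_length]
    rw [List.getD_eq_getElem _ _ (by omega), List.getD_eq_getElem _ _ (by omega)]

end Aux3
section Aux4

variable {X : Type*}

lemma state_closure {G : Subgroup (Equiv.Perm (List X))} (hG : IsTreeAutGroup G)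
    {F : Set (Equiv.Perm (List X))} (hFG : F ⊆ ↑G)
    (hFst : ∀ f ∈ F, ∀ u : List X, ∃ y ∈ F, ⇑y = state (⇑f) u) :
    ∀ x ∈ Subgroup.closure F, ∀ u : List X, ∃ y ∈ Subgroup.closure F, ⇑y = state (⇑x) u := by
  have hle : Subgroup.closure F ≤ G := (Subgroup.closure_le G).mpr hFG
  intro x hx
  induction hx using Subgroup.closure_induction with
  | mem z hz =>
      intro u
      obtain ⟨y, hy, hy'⟩ := hFst z hz u
      exact ⟨y, Subgroup.subset_closure hy, hy'⟩
  | one =>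
      intro u
      exact ⟨1, one_mem _, (state_one u).symm ▸ rfl⟩
  | mul a b ha hb iha ihb =>
      intro u
      have hbaut : IsTreeAut b := hG b (hle hb)
      obtain ⟨y₂, hy₂, hy₂'⟩ := ihb u
      obtain ⟨y₁, hy₁, hy₁'⟩ := iha (b u)
      refine ⟨y₁ * y₂, mul_mem hy₁ hy₂, ?_⟩
      rw [state_mul hbaut u]
      show ⇑y₁ ∘ ⇑y₂ = _
      rw [hy₁', hy₂']
  | inv a ha iha =>
      intro u
      have haaut : IsTreeAut a := hG a (hle ha)
      have hainv : IsTreeAut a⁻¹ := hG a⁻¹ (inv_mem (hle ha))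
      obtain ⟨y, hy, hy'⟩ := iha (a⁻¹ u)
      refine ⟨y⁻¹, inv_mem hy, ?_⟩
      have hcomp : state (⇑a) (a⁻¹ u) ∘ state (⇑a⁻¹) u = id := by
        rw [← state_mul hainv u, mul_inv_cancel, state_one]
      funext w
      have h1 : y (state (⇑a⁻¹) u w) = w := by
        have := congrFun hcomp w
        simp only [Function.comp_apply, id_eq] at this
        rw [hy']
        exact this
      show y⁻¹ w = state (⇑a⁻¹) u w
      conv_lhs => rw [← h1]
      simp

lemma state_replicate {G : Subgroup (Equiv.Perm (List X))} {i : X} (hp : Persistent G i)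
    {f : Equiv.Perm (List X)} (hf : f ∈ G) (k : ℕ) :
    state (⇑f) (List.replicate k i) = ⇑f := by
  induction k with
  | zero => funext w; simp [state]
  | succ k ih =>
      have : List.replicate (k + 1) i = [i] ++ List.replicate k i := by
        simp [List.replicate_succ]
      rw [this, ← state_state, hp f hf, ih]

lemma prefixFn_const (x : X) (k : ℕ) : prefixFn (fun _ => x) k = List.replicate k x := by
  simp [prefixFn, List.ofFn_const]

lemma catWord_nil (p : ℕ → X) : catWord ([] : List X) p = p := by
  funext n
  rw [catWord_apply_ge _ _ (by simp)]
  simp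

lemma catWord_prefix_tail (p : ℕ → X) (a : List X) (h : prefixFn p a.length = a) :
    catWord a (fun n => p (n + a.length)) = p := by
  funext n
  rcases lt_or_ge n a.length with hn | hn
  · rw [catWord_apply_lt _ _ hn]
    have h2 := congrArg (fun l : List X => l.getD n (p n)) h
    rw [List.getD_eq_getElem _ _ (by rw [prefixFn_length]; omega),
        List.getD_eq_getElem _ _ hn] at h2
    rw [← h2]
    simp [prefixFn]
  · rw [catWord_apply_ge _ _ hn]
    congr 1
    omega

end Aux4
section Aux5

variable {X : Type*}

/-- `h` is everywhere locally given by an element of `H` with displacement bound `D`. -/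
def LocallyH (G H : Subgroup (Equiv.Perm (List X))) (D : ℕ) (h : (ℕ → X) → ℕ → X) : Prop :=
  ∀ (p : ℕ → X) (m : ℕ), ∃ (a b : List X) (f : Equiv.Perm (List X)), f ∈ H ∧
    m ≤ a.length ∧ a.length ≤ b.length + D ∧ b.length ≤ a.length + D ∧
    prefixFn p a.length = a ∧ ∀ q : ℕ → X, h (catWord a q) = catWord b (boundary (⇑f) q)

lemma locallyH_one (G H : Subgroup (Equiv.Perm (List X))) :
    LocallyH G H 0 id := by
  intro p m
  refine ⟨prefixFn p m, prefixFn p m, 1, one_mem _, by simp [prefixFn_length],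
    le_rfl, le_rfl, by rw [prefixFn_length], fun q => ?_⟩
  rw [boundary_one]
  rfl

lemma locallyH_mul {G H : Subgroup (Equiv.Perm (List X))} (hG : IsTreeAutGroup G)
    (hle : H ≤ G)
    (hst : ∀ x ∈ H, ∀ u : List X, ∃ y ∈ H, ⇑y = state (⇑x) u)
    {D₁ D₂ : ℕ} {h₁ h₂ : (ℕ → X) → ℕ → X}
    (hh₁ : LocallyH G H D₁ h₁) (hh₂ : LocallyH G H D₂ h₂) :
    LocallyH G H (D₁ + D₂) (h₁ ∘ h₂) := by
  intro p m
  obtain ⟨a₂, b₂, f₂, hf₂, hm₂, hab₂, hba₂, hpre₂, heq₂⟩ := hh₂ p m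
  have hf₂aut : IsTreeAut f₂ := hG f₂ (hle hf₂)
  set p₂ : ℕ → X := fun n => p (n + a₂.length) with hp₂
  have hpsplit : catWord a₂ p₂ = p := catWord_prefix_tail p a₂ hpre₂
  set p' : ℕ → X := h₂ p with hp'
  have hp'eq : p' = catWord b₂ (boundary (⇑f₂) p₂) := by
    rw [hp', ← hpsplit, heq₂]
  obtain ⟨a₁, b₁, f₁, hf₁, hm₁, hab₁, hba₁, hpre₁, heq₁⟩ := hh₁ p' b₂.length
  set l : ℕ := a₁.length - b₂.length with hl
  have hla : a₁.length = b₂.length + l := by omega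
  set c' : List X := prefixFn p₂ l with hc'
  have hc'len : c'.length = l := prefixFn_length _ _
  have ha₁ : a₁ = b₂ ++ f₂ c' := by
    rw [← hpre₁, hp'eq, hla, prefixFn_catWord_add, prefixFn_boundary hf₂aut]
  obtain ⟨y, hy, hy'⟩ := hst f₂ hf₂ c'
  refine ⟨a₂ ++ c', b₁, f₁ * y, mul_mem hf₁ hy, ?_, ?_, ?_, ?_, fun q => ?_⟩
  · simp only [List.length_append]; omega
  · have : (f₂ c').length = c'.length := hf₂aut.length_eq c'
    have hlb₁ : a₁.length ≤ b₁.length + D₁ := hab₁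
    have hla₁ : a₁.length = b₂.length + (f₂ c').length := by rw [ha₁]; simp
    simp only [List.length_append]; omega
  · have hla₁ : a₁.length = b₂.length + (f₂ c').length := by rw [ha₁]; simp
    have : (f₂ c').length = c'.length := hf₂aut.length_eq c'
    simp only [List.length_append]; omega
  · rw [← hpsplit, List.length_append, hc'len, ← prefixFn_length p₂ l,
      show a₂.length + (prefixFn p₂ l).length = a₂.length + l by rw [prefixFn_length]]
    rw [prefixFn_catWord_add]
  · show h₁ (h₂ (catWord (a₂ ++ c') q)) = _
    rw [catWord_append, heq₂, boundary_catWord hf₂aut, ← hy', ← catWord_append, ← ha₁, heq₁]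
    congr 1
    rw [← boundary_mul (hG f₁ (hle hf₁)) (hG y (hle hy))]

lemma locallyH_inv {G H : Subgroup (Equiv.Perm (List X))} (hG : IsTreeAutGroup G)
    (hle : H ≤ G) {D : ℕ} {h : Equiv.Perm (ℕ → X)}
    (hh : LocallyH G H D ⇑h) : LocallyH G H D ⇑h⁻¹ := by
  intro p m
  obtain ⟨a, b, f, hf, hm, hab, hba, hpre, heq⟩ := hh (⇑h⁻¹ p) (m + D)
  have hfaut : IsTreeAut f := hG f (hle hf)
  have hfinv : IsTreeAut f⁻¹ := hG f⁻¹ (inv_mem (hle hf))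
  set t : ℕ → X := fun n => (⇑h⁻¹ p) (n + a.length) with ht
  have hsplit : catWord a t = ⇑h⁻¹ p := catWord_prefix_tail _ a hpre
  have hp : p = catWord b (boundary (⇑f) t) := by
    conv_lhs => rw [← Equiv.apply_symm_apply h p]
    show h (⇑h⁻¹ p) = _
    rw [← hsplit, heq]
  refine ⟨b, a, f⁻¹, inv_mem hf, by omega, by omega, by omega, ?_, fun q => ?_⟩
  · conv_lhs => rw [hp]
    exact prefixFn_catWord _ _
  · have : catWord b q = h (catWord a (boundary (⇑f⁻¹) q)) := by
      rw [heq, boundary_inv_right hfaut hfinv]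
    rw [this]
    exact Equiv.symm_apply_apply h _

end Aux5
section Aux6

variable {X : Type*} [LinearOrder X]

lemma locallyH_of_represents {G H : Subgroup (Equiv.Perm (List X))} (hG : IsTreeAutGroup G)
    {h : (ℕ → X) → ℕ → X} {n : ℕ} {u v : Fin n → List X} {σ : Equiv.Perm (Fin n)}
    {g : Fin n → Equiv.Perm (List X)} (hrep : Represents G h n u v σ g)
    (hreal : ∀ (j : Fin n) (w : List X), ∃ y ∈ H, ⇑y = state (⇑(g j)) w) :
    LocallyH G H (Finset.univ.sup fun i => (u i).length + (v i).length) h := by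
  obtain ⟨-, -, -, hleafv, hgmem, hform⟩ := hrep
  intro p m
  obtain ⟨w, ⟨⟨j, hj⟩, hpw⟩, -⟩ := hleafv.2 p
  subst hj
  have hgaut : IsTreeAut (g j) := hG (g j) (hgmem j)
  set p₁ : ℕ → X := fun k => p (k + (v j).length) with hp₁
  have hsplit : catWord (v j) p₁ = p := catWord_prefix_tail p (v j) hpw
  set c : List X := prefixFn p₁ m with hc
  have hclen : c.length = m := prefixFn_length _ _
  obtain ⟨y, hy, hy'⟩ := hreal j c
  have hgc : (g j c).length = c.length := hgaut.length_eq c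
  set D := Finset.univ.sup fun i => (u i).length + (v i).length with hD
  have hvD : (v j).length ≤ D := le_trans (by omega) (Finset.le_sup (Finset.mem_univ j))
  have huD : (u (σ j)).length ≤ D :=
    le_trans (by omega) (Finset.le_sup (Finset.mem_univ (σ j)))
  refine ⟨v j ++ c, u (σ j) ++ g j c, y, hy, ?_, ?_, ?_, ?_, fun q => ?_⟩
  · simp only [List.length_append]; omega
  · simp only [List.length_append]; omega
  · simp only [List.length_append]; omega
  · rw [← hsplit, List.length_append, hclen,
      show (v j).length + m = (v j).length + (prefixFn p₁ m).length by rw [prefixFn_length],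
      prefixFn_catWord_add, prefixFn_length]
  · rw [catWord_append, hform j, boundary_catWord hgaut, ← hy', ← catWord_append]

lemma catWord_sep {X : Type*} {x x' : X} (hxx : x ≠ x') {c c' : List X}
    {Φ Ψ : (ℕ → X) → ℕ → X} (hΦ : Function.Surjective Φ) (hΨ : Function.Surjective Ψ)
    (h : ∀ q, catWord c (Φ q) = catWord c' (Ψ q)) : c = c' ∧ ∀ q, Φ q = Ψ q := by
  have key : ∀ (d d' : List X) (A B : (ℕ → X) → ℕ → X), Function.Surjective B →
      (∀ q, catWord d (A q) = catWord d' (B q)) → ¬ d'.length < d.length := by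
    intro d d' A B hB hAB hlt
    obtain ⟨q₁, hq₁⟩ := hB (fun _ => x)
    obtain ⟨q₂, hq₂⟩ := hB (fun _ => x')
    have h1 := congrFun (hAB q₁) d'.length
    have h2 := congrFun (hAB q₂) d'.length
    rw [catWord_apply_lt _ _ hlt, catWord_apply_ge _ _ le_rfl, hq₁] at h1
    rw [catWord_apply_lt _ _ hlt, catWord_apply_ge _ _ le_rfl, hq₂] at h2
    exact hxx (h1.symm.trans h2)
  have hlen : c.length = c'.length := by
    rcases Nat.lt_trichotomy c.length c'.length with hl | hl | hl
    · exact absurd hl (key c' c Ψ Φ hΦ (fun q => (h q).symm))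
    · exact hl
    · exact absurd hl (key c c' Φ Ψ hΨ h)
  obtain ⟨q₀, -⟩ := hΦ (fun _ => x)
  have hcc : c = c' := by
    have := congrArg (fun r => prefixFn r c.length) (h q₀)
    rw [prefixFn_catWord, hlen, prefixFn_catWord] at this
    exact this
  subst hcc
  refine ⟨rfl, fun q => ?_⟩
  funext k
  have := congrFun (h q) (k + c.length)
  rwa [catWord_apply_add, catWord_apply_add] at this

lemma boundary_surjective {X : Type*} {f : Equiv.Perm (List X)} (hf : IsTreeAut f)
    (hf' : IsTreeAut f⁻¹) : Function.Surjective (boundary (⇑f)) := fun q =>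
  ⟨boundary (⇑f⁻¹) q, boundary_inv_right hf hf' q⟩

end Aux6
/-- Let `G ≤ Aut(T_d)` be a persistent, finite-state, self-similar
subgroup.  If the Röver–Nekrashevych group `V_d(G)` is finitely generated, then so is `G`. -/
theorem fg_of_roverNekrashevych_fg [Fintype X] (hd : 2 ≤ Fintype.card X)
    (G : Subgroup (Equiv.Perm (List X))) (hG : IsTreeAutGroup G)
    (hss : SelfSimilar G) (hfs : FiniteStateGroup G) (hpers : ∃ i : X, Persistent G i)
    (V : Subgroup (Equiv.Perm (ℕ → X))) (hV : (V : Set (Equiv.Perm (ℕ → X))) = RNSet G)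
    (hVfg : Group.FG ↥V) :
    Group.FG ↥G := by
  classical
  obtain ⟨i, hpersi⟩ := hpers
  obtain ⟨x₀, x₁, hx01⟩ := (Fintype.one_lt_card_iff (α := X)).mp (by omega)
  have hne : Nonempty X := ⟨x₀⟩
  -- choose representations for all elements of `V`
  have hmem : ∀ s : ↥V, ∃ (n : ℕ) (u v : Fin n → List X) (σ : Equiv.Perm (Fin n))
      (g : Fin n → Equiv.Perm (List X)),
      Represents G (⇑(↑s : Equiv.Perm (ℕ → X))) n u v σ g := by
    intro s
    have hs : (↑s : Equiv.Perm (ℕ → X)) ∈ RNSet G := by rw [← hV]; exact s.2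
    exact hs
  choose nn uu vv σσ gg hrep using hmem
  obtain ⟨S, hSclo, hSfin⟩ := Group.fg_iff.mp hVfg
  set Fset : Set (Equiv.Perm (List X)) :=
    ⋃ s ∈ S, {y : Equiv.Perm (List X) |
      ∃ (j : Fin (nn s)) (w : List X), ⇑y = state (⇑(gg s j)) w} with hFset
  have hgmem : ∀ (s : ↥V) (j : Fin (nn s)), gg s j ∈ G := fun s j => (hrep s).2.2.2.2.1 j
  have hFfin : Fset.Finite := by
    refine Set.Finite.biUnion hSfin fun s _ => ?_
    have heq : {y : Equiv.Perm (List X) | ∃ (j : Fin (nn s)) (w : List X),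
        ⇑y = state (⇑(gg s j)) w}
        = ⋃ j : Fin (nn s), (fun y : Equiv.Perm (List X) => ⇑y) ⁻¹'
            {φ : List X → List X | ∃ w : List X, φ = state (⇑(gg s j)) w} := by
      ext y
      simp [Set.mem_iUnion]
    rw [heq]
    exact Set.finite_iUnion fun j =>
      Set.Finite.preimage Equiv.coe_fn_injective.injOn (hfs (gg s j) (hgmem s j))
  have hFsub : Fset ⊆ ↑G := by
    intro y hy
    simp only [hFset, Set.mem_iUnion, Set.mem_setOf_eq] at hy
    obtain ⟨s, hs, j, w, hyw⟩ := hy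
    obtain ⟨g', hg', hg''⟩ := hss (gg s j) (hgmem s j) w
    have hyg : y = g' := Equiv.coe_fn_injective (hyw.trans hg''.symm)
    rw [hyg]; exact hg'
  have hFst : ∀ f ∈ Fset, ∀ u : List X, ∃ y ∈ Fset, ⇑y = state (⇑f) u := by
    intro f hf u
    simp only [hFset, Set.mem_iUnion, Set.mem_setOf_eq] at hf
    obtain ⟨s, hs, j, w, hfw⟩ := hf
    obtain ⟨g', hg', hg''⟩ := hss (gg s j) (hgmem s j) (w ++ u)
    refine ⟨g', ?_, ?_⟩
    · simp only [hFset, Set.mem_iUnion, Set.mem_setOf_eq]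
      exact ⟨s, hs, j, w ++ u, hg''⟩
    · rw [hg'', hfw, state_state]
  set H := Subgroup.closure Fset with hH
  have hHle : H ≤ G := (Subgroup.closure_le G).mpr hFsub
  have hst : ∀ x ∈ H, ∀ u : List X, ∃ y ∈ H, ⇑y = state (⇑x) u :=
    state_closure hG hFsub hFst
  have hAll : ∀ x : ↥V, ∃ D, LocallyH G H D ⇑(↑x : Equiv.Perm (ℕ → X)) := by
    intro x
    have hx : x ∈ Subgroup.closure S := by rw [hSclo]; exact Subgroup.mem_top x
    induction hx using Subgroup.closure_induction with
    | mem z hz =>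
        refine ⟨_, locallyH_of_represents hG (hrep z) ?_⟩
        intro j w
        obtain ⟨g', hg', hg''⟩ := hss (gg z j) (hgmem z j) w
        refine ⟨g', Subgroup.subset_closure ?_, hg''⟩
        simp only [hFset, Set.mem_iUnion, Set.mem_setOf_eq]
        exact ⟨z, hz, j, w, hg''⟩
    | one =>
        refine ⟨0, ?_⟩
        have h1 : ⇑((↑(1 : ↥V)) : Equiv.Perm (ℕ → X)) = id := rfl
        rw [h1]
        exact locallyH_one G H
    | mul a b ha hb iha ihb =>
        obtain ⟨D₁, h₁⟩ := iha
        obtain ⟨D₂, h₂⟩ := ihb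
        refine ⟨D₁ + D₂, ?_⟩
        have h2 : ⇑((↑(a * b) : Equiv.Perm (ℕ → X)))
            = ⇑(↑a : Equiv.Perm (ℕ → X)) ∘ ⇑(↑b : Equiv.Perm (ℕ → X)) := rfl
        rw [h2]
        exact locallyH_mul hG hHle hst h₁ h₂
    | inv a ha iha =>
        obtain ⟨D, hD⟩ := iha
        refine ⟨D, ?_⟩
        have h2 : ((↑(a⁻¹) : Equiv.Perm (ℕ → X))) = (↑a : Equiv.Perm (ℕ → X))⁻¹ := rfl
        rw [h2]
        exact locallyH_inv hG hHle hD
  have hGH : G ≤ H := by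
    intro g hg
    have hgaut : IsTreeAut g := hG g hg
    have hginv : IsTreeAut g⁻¹ := hG g⁻¹ (inv_mem hg)
    set e : Equiv.Perm (ℕ → X) := ⟨boundary ⇑g, boundary ⇑g⁻¹,
      boundary_inv_left hgaut hginv, boundary_inv_right hgaut hginv⟩ with he
    have hmono : StrictMono (fun _ : Fin 1 => ([] : List X)) := by
      intro a b hab
      rw [Subsingleton.elim a b] at hab
      exact absurd hab (lt_irrefl b)
    have hleaf : IsLeafSet (Set.range fun _ : Fin 1 => ([] : List X)) := by
      refine ⟨Set.finite_range _, fun p => ?_⟩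
      refine ⟨[], ⟨⟨0, rfl⟩, by simp [prefixFn]⟩, ?_⟩
      rintro w ⟨⟨k, hk⟩, -⟩
      exact hk.symm
    have heV : e ∈ V := by
      rw [← SetLike.mem_coe, hV]
      refine ⟨1, (fun _ => []), (fun _ => []), 1, (fun _ => g),
        hmono, hmono, hleaf, hleaf, fun _ => hg, fun j p => ?_⟩
      rw [catWord_nil, catWord_nil]
      rfl
    obtain ⟨D, hD⟩ := hAll ⟨e, heV⟩
    obtain ⟨a, b, f, hfH, -, -, -, hpre, heq⟩ := hD (fun _ => i) 0
    have ha : a = List.replicate a.length i := by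
      conv_lhs => rw [← hpre, prefixFn_const]
    have hstate : state (⇑g) a = ⇑g := by
      conv_lhs => rw [ha]
      exact state_replicate hpersi hg a.length
    have heq' : ∀ q : ℕ → X, catWord (g a) (boundary (⇑g) q) = catWord b (boundary (⇑f) q) := by
      intro q
      have h2 : boundary (⇑g) (catWord a q) = catWord b (boundary (⇑f) q) := heq q
      rw [boundary_catWord hgaut, hstate] at h2
      exact h2
    have hfG : f ∈ G := hHle hfH
    have hfaut : IsTreeAut f := hG f hfG
    have hfinv : IsTreeAut f⁻¹ := hG f⁻¹ (inv_mem hfG)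
    obtain ⟨-, hbd⟩ := catWord_sep hx01 (boundary_surjective hgaut hginv)
      (boundary_surjective hfaut hfinv) heq'
    have hbb : boundary (⇑g) = boundary (⇑f) := funext hbd
    have hgf : g = f := boundary_injective hgaut hfaut hbb
    rw [hgf]
    exact hfH
  have hGeq : G = H := le_antisymm hGH hHle
  rw [Group.fg_iff_subgroup_fg, hGeq, hH]
  exact (Subgroup.fg_iff _).mpr ⟨Fset, rfl, hFfin⟩

end RoverNekrashevych
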